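/- With F and the normalization of the previous statement (coefficients of x^i y^{q1-1} all zero and coefficient of x^{q2-1} zero), suppose G is another polynomial of the same shape also satisfying the normalization, and suppose the substitution x ↦ α1 x + β, y ↦ α2 y + γ_0 + γ_1 x + ... + γ_s x^s (α1, α2 ≠ 0) maps the ideal (G) into the ideal (F) (i.e. transforms G into a scalar multiple of F). Then β = 0 and γ_0 = ... = γ_s = 0. -/

import Mathlib

/-!
View polynomials in `x = X 0`, `y = X 1` as polynomials in `y` over `ℂ[x]`. The substitution
turns `G` into `P (α2 y + γ(x))` with `P` of `y`-degree `q1`, and this equals `h * F` with `F` also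
of `y`-degree `q1`; hence `h` is constant in `y`. Neither form has a `y ^ (q1 - 1)` term, so
comparing `y ^ (q1 - 1)`-coefficients leaves `q1 * c * α2 ^ (q1 - 1) * γ(x) = 0`, i.e. `γ = 0`.
Then setting `y = 0` gives `G(α1 x + β, 0) = h(x, 0) * F(x, 0)`, and the same one-variable
argument in `x` (degree `q2`, no `x ^ (q2 - 1)` term) gives `β = 0`.
-/

open MvPolynomial

/-- Predicate: `F` is a plane Weierstrass polynomial in Tschirnhaus form for
coprime `q1 < q2`: top monomials `x^q2`, `y^q1` with nonzero coefficients, all other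
monomials strictly below the hypotenuse, all coefficients of `x^i y^(q1-1)` vanish,
and the coefficient of `x^(q2-1)` vanishes. -/
def TWform (q1 q2 : ℕ) (F : MvPolynomial (Fin 2) ℂ) : Prop :=
  F.coeff (Finsupp.single 0 q2) ≠ 0 ∧
  F.coeff (Finsupp.single 1 q1) ≠ 0 ∧
  (∀ d ∈ F.support, q1 * d 0 + q2 * d 1 ≤ q1 * q2 ∧
    (q1 * d 0 + q2 * d 1 = q1 * q2 →
      d = Finsupp.single 0 q2 ∨ d = Finsupp.single 1 q1)) ∧
  (∀ i : ℕ, F.coeff (Finsupp.single 0 i + Finsupp.single 1 (q1 - 1)) = 0) ∧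
  F.coeff (Finsupp.single 0 (q2 - 1)) = 0

namespace Polynomial

variable {S : Type*} [CommSemiring S]

theorem coeff_C_mul_X_add_C_pow (a b : S) (n k : ℕ) :
    ((C a * X + C b) ^ n).coeff k = n.choose k * a ^ k * b ^ (n - k) := by
  rw [add_pow, finsetSum_coeff, Finset.sum_eq_single k]
  · rw [mul_pow, ← C_pow, ← C_pow, ← C_eq_natCast, coeff_mul_C, coeff_mul_C, coeff_C_mul,
      coeff_X_pow_self]
    ring
  · intro m _ hmk
    rw [mul_pow, ← C_pow, ← C_pow, ← C_eq_natCast, coeff_mul_C, coeff_mul_C, coeff_C_mul,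
      coeff_X_pow, if_neg (Ne.symm hmk)]
    ring
  · intro hk
    rw [Nat.choose_eq_zero_of_lt (by simpa using hk)]
    simp

theorem coeff_comp_C_mul_X_add_C {P : S[X]} {n : ℕ} (hP : P.natDegree ≤ n + 1) (a b : S) :
    (P.comp (C a * X + C b)).coeff n = (P.coeff n + (n + 1) * P.coeff (n + 1) * b) * a ^ n := by
  rw [comp, eval₂_eq_sum_range' C (Nat.lt_succ_of_le hP), finsetSum_coeff,
    Finset.sum_range_succ, Finset.sum_range_succ, Finset.sum_eq_zero]
  · simp only [coeff_C_mul, coeff_C_mul_X_add_C_pow, Nat.choose_self, Nat.choose_succ_self_right,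
      Nat.sub_self, Nat.add_sub_cancel_left]
    push_cast
    ring
  · intro k hk
    rw [coeff_C_mul, coeff_C_mul_X_add_C_pow,
      Nat.choose_eq_zero_of_lt (Finset.mem_range.mp hk)]
    simp

theorem coeff_mul_eq_of_natDegree_mul_le [IsDomain S] {h F : S[X]} (hF : F ≠ 0)
    (hdeg : (h * F).natDegree ≤ F.natDegree) (k : ℕ) :
    (h * F).coeff k = h.coeff 0 * F.coeff k := by
  rcases eq_or_ne h 0 with rfl | hh
  · simp
  have h0 : h.natDegree = 0 := by
    rw [natDegree_mul hh hF] at hdeg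
    omega
  rw [eq_C_of_natDegree_eq_zero h0, coeff_C_mul, coeff_C_zero]

theorem eq_zero_of_comp_C_mul_X_add_C_eq_mul [IsDomain S] [CharZero S] {P F h : S[X]} {n : ℕ}
    {a b : S} (hn : 0 < n) (ha : a ≠ 0) (hP : P.natDegree ≤ n) (hPn : P.coeff n ≠ 0)
    (hPn' : P.coeff (n - 1) = 0) (hF : F.natDegree = n) (hFn' : F.coeff (n - 1) = 0)
    (heq : P.comp (C a * X + C b) = h * F) : b = 0 := by
  obtain ⟨m, rfl⟩ : ∃ m, n = m + 1 := ⟨n - 1, by omega⟩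
  have hF0 : F ≠ 0 := by rintro rfl; simp at hF
  have hdeg : (h * F).natDegree ≤ F.natDegree := by
    rw [← heq, hF]
    simpa using (natDegree_comp_le (p := P) (q := C a * X + C b)).trans
      (Nat.mul_le_mul hP natDegree_linear_le)
  -- `h` is constant by degrees, so the `X ^ m`-coefficient of `h * F` vanishes with that of `F`.
  have key := coeff_comp_C_mul_X_add_C hP a b
  rw [heq, coeff_mul_eq_of_natDegree_mul_le hF0 hdeg] at key
  simp only [Nat.add_sub_cancel] at hPn' hFn'
  rw [hFn', hPn', mul_zero, zero_add, eq_comm] at key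
  have hm : ((m + 1 : ℕ) : S) ≠ 0 := Nat.cast_ne_zero.mpr m.succ_ne_zero
  push_cast at hm
  simpa [hm, ha, hPn] using key

end Polynomial

namespace MvPolynomial

variable {R : Type*} [CommSemiring R]

noncomputable def toIteratedPoly : MvPolynomial (Fin 2) R →ₐ[R] Polynomial (Polynomial R) :=
  aeval ![Polynomial.C Polynomial.X, Polynomial.X]

theorem coeff_coeff_toIteratedPoly (P : MvPolynomial (Fin 2) R) (i j : ℕ) :
    ((toIteratedPoly P).coeff j).coeff i = P.coeff (Finsupp.single 0 i + Finsupp.single 1 j) := by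
  induction P using MvPolynomial.induction_on' with
  | add p q hp hq => simp [hp, hq]
  | monomial d c =>
    rw [toIteratedPoly, aeval_monomial, Finsupp.prod_fintype _ _ (fun _ => pow_zero _),
      Fin.prod_univ_two, coeff_monomial]
    simp only [Matrix.cons_val_zero, Matrix.cons_val_one,
      ← Polynomial.C_pow, Polynomial.algebraMap_apply, ← mul_assoc, ← Polynomial.C_mul,
      Polynomial.coeff_C_mul_X_pow, Algebra.algebraMap_self, RingHom.id_apply]
    have hd : d = Finsupp.single 0 i + Finsupp.single 1 j ↔ i = d 0 ∧ j = d 1 := by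
      refine ⟨by rintro rfl; simp, fun ⟨hi, hj⟩ => ?_⟩
      ext k
      fin_cases k <;> simp [hi, hj]
    simp only [hd]
    split_ifs with hj hij hij
    · rw [Polynomial.coeff_C_mul_X_pow, if_pos hij.1]
    · rw [Polynomial.coeff_C_mul_X_pow, if_neg fun hi => hij ⟨hi, hj⟩]
    · exact absurd hij.2 hj
    · exact Polynomial.coeff_zero i

theorem toIteratedPoly_aeval {u v : MvPolynomial (Fin 2) R} {u' : Polynomial R}
    (hu : toIteratedPoly u = Polynomial.C u') (G : MvPolynomial (Fin 2) R) :
    toIteratedPoly (aeval ![u, v] G) =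
      ((toIteratedPoly G).map (Polynomial.compRingHom u')).comp (toIteratedPoly v) := by
  induction G using MvPolynomial.induction_on with
  | C a => simp [toIteratedPoly]
  | add p q hp hq => rw [map_add, map_add, hp, hq, map_add, Polynomial.map_add, Polynomial.add_comp]
  | mul_X p i hp =>
    rw [map_mul, map_mul, hp, map_mul, Polynomial.map_mul, Polynomial.mul_comp, aeval_X]
    congr 1
    fin_cases i
    · simpa [toIteratedPoly] using hu
    · simp [toIteratedPoly]

end MvPolynomial

namespace TWform

open Polynomial (natDegree_le_iff_coeff_eq_zero le_natDegree_of_ne_zero)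

variable {q1 q2 : ℕ} {F : MvPolynomial (Fin 2) ℂ}

theorem coeff_eq_zero_of_lt_weight (hF : TWform q1 q2 F) {i j : ℕ}
    (h : q1 * q2 < q1 * i + q2 * j) :
    F.coeff (Finsupp.single 0 i + Finsupp.single 1 j) = 0 := by
  by_contra hne
  have := (hF.2.2.1 _ (mem_support_iff.mpr hne)).1
  simp at this
  omega

theorem natDegree_toIteratedPoly_le (hF : TWform q1 q2 F) (hq2 : 0 < q2) :
    (toIteratedPoly F).natDegree ≤ q1 := by
  refine natDegree_le_iff_coeff_eq_zero.mpr fun j hj => Polynomial.ext fun i => ?_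
  rw [coeff_coeff_toIteratedPoly, Polynomial.coeff_zero]
  exact hF.coeff_eq_zero_of_lt_weight (by nlinarith)

theorem coeff_toIteratedPoly_top (hF : TWform q1 q2 F) (hq1 : 0 < q1) :
    (toIteratedPoly F).coeff q1 = Polynomial.C (F.coeff (Finsupp.single 1 q1)) := by
  ext i
  rw [coeff_coeff_toIteratedPoly, Polynomial.coeff_C]
  split_ifs with hi
  · simp [hi]
  · exact hF.coeff_eq_zero_of_lt_weight (by nlinarith [Nat.pos_of_ne_zero hi])

theorem natDegree_toIteratedPoly (hF : TWform q1 q2 F) (hq1 : 0 < q1) (hq2 : 0 < q2) :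
    (toIteratedPoly F).natDegree = q1 :=
  (hF.natDegree_toIteratedPoly_le hq2).antisymm <| le_natDegree_of_ne_zero <| by
    rw [hF.coeff_toIteratedPoly_top hq1]
    exact Polynomial.C_ne_zero.mpr hF.2.1

theorem coeff_toIteratedPoly_sub_one (hF : TWform q1 q2 F) :
    (toIteratedPoly F).coeff (q1 - 1) = 0 :=
  Polynomial.ext fun i => by
    rw [coeff_coeff_toIteratedPoly, Polynomial.coeff_zero]
    exact hF.2.2.2.1 i

theorem coeff_coeff_zero_toIteratedPoly_top (hF : TWform q1 q2 F) :
    ((toIteratedPoly F).coeff 0).coeff q2 ≠ 0 := by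
  simpa [coeff_coeff_toIteratedPoly] using hF.1

theorem natDegree_coeff_zero_toIteratedPoly (hF : TWform q1 q2 F) (hq1 : 0 < q1) :
    ((toIteratedPoly F).coeff 0).natDegree = q2 := by
  refine le_antisymm (natDegree_le_iff_coeff_eq_zero.mpr fun i hi => ?_)
    (le_natDegree_of_ne_zero hF.coeff_coeff_zero_toIteratedPoly_top)
  rw [coeff_coeff_toIteratedPoly]
  exact hF.coeff_eq_zero_of_lt_weight (by nlinarith)

theorem coeff_coeff_zero_toIteratedPoly_sub_one (hF : TWform q1 q2 F) :
    ((toIteratedPoly F).coeff 0).coeff (q2 - 1) = 0 := by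
  simpa [coeff_coeff_toIteratedPoly] using hF.2.2.2.2

end TWform

theorem stmt_9_general (q1 q2 : ℕ) (hq1 : 0 < q1) (hlt : q1 < q2)
    (s : ℕ)
    (F G : MvPolynomial (Fin 2) ℂ)
    (hF : TWform q1 q2 F) (hG : TWform q1 q2 G)
    (α1 α2 β : ℂ) (γ : Fin (s + 1) → ℂ) (hα1 : α1 ≠ 0) (hα2 : α2 ≠ 0)
    (hmap : aeval ![C α1 * X 0 + C β,
              C α2 * X 1 + ∑ i : Fin (s + 1), C (γ i) * X 0 ^ (i : ℕ)] G ∈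
            Ideal.span {F}) :
    β = 0 ∧ ∀ i, γ i = 0 := by
  have hq2 : 0 < q2 := hq1.trans hlt
  obtain ⟨h, hh⟩ := Ideal.mem_span_singleton'.mp hmap
  set x : Polynomial ℂ := Polynomial.X
  set p := ∑ i : Fin (s + 1), Polynomial.C (γ i) * x ^ (i : ℕ)
  set P := (toIteratedPoly G).map (Polynomial.compRingHom (Polynomial.C α1 * x + Polynomial.C β))
  have heq : P.comp (Polynomial.C (Polynomial.C α2) * Polynomial.X + Polynomial.C p) =
      toIteratedPoly h * toIteratedPoly F := by
    rw [← map_mul, hh, toIteratedPoly_aeval (u' := Polynomial.C α1 * x + Polynomial.C β)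
      (by simp [toIteratedPoly, x])]
    congr 1
    simp [toIteratedPoly, p, x]
  have hp : p = 0 := Polynomial.eq_zero_of_comp_C_mul_X_add_C_eq_mul hq1
    (Polynomial.C_ne_zero.mpr hα2)
    (Polynomial.natDegree_map_le.trans (hG.natDegree_toIteratedPoly_le hq2))
    (by simpa [P, hG.coeff_toIteratedPoly_top hq1] using hG.2.1)
    (by simp [hG.coeff_toIteratedPoly_sub_one])
    (hF.natDegree_toIteratedPoly hq1 hq2) hF.coeff_toIteratedPoly_sub_one heq
  refine ⟨?_, fun i => ?_⟩
  · have heq0 : ((toIteratedPoly G).coeff 0).comp (Polynomial.C α1 * x + Polynomial.C β) =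
        (toIteratedPoly h).coeff 0 * (toIteratedPoly F).coeff 0 := by
      simpa [hp, P, Polynomial.mul_coeff_zero, Polynomial.coeff_zero_eq_eval_zero] using
        congrArg (Polynomial.coeff · 0) heq
    exact Polynomial.eq_zero_of_comp_C_mul_X_add_C_eq_mul hq2 hα1
      (hG.natDegree_coeff_zero_toIteratedPoly hq1).le hG.coeff_coeff_zero_toIteratedPoly_top
      hG.coeff_coeff_zero_toIteratedPoly_sub_one (hF.natDegree_coeff_zero_toIteratedPoly hq1)
      hF.coeff_coeff_zero_toIteratedPoly_sub_one heq0
  · simpa [p, x, Polynomial.finsetSum_coeff, Polynomial.coeff_C_mul_X_pow, Fin.val_inj] using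
      congrArg (Polynomial.coeff · i) hp

/-- Any affine-triangular substitution carrying one Tschirnhaus–Weierstrass form
into (the ideal of) another must be a pure scaling. -/
theorem stmt_9 (q1 q2 : ℕ) (hcop : Nat.Coprime q1 q2) (hq1 : 0 < q1) (hlt : q1 < q2)
    (s : ℕ) (hs : s = (q2 - 1) / q1)
    (F G : MvPolynomial (Fin 2) ℂ)
    (hF : TWform q1 q2 F) (hG : TWform q1 q2 G)
    (α1 α2 β : ℂ) (γ : Fin (s + 1) → ℂ) (hα1 : α1 ≠ 0) (hα2 : α2 ≠ 0)
    (hmap : aeval ![C α1 * X 0 + C β,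
              C α2 * X 1 + ∑ i : Fin (s + 1), C (γ i) * X 0 ^ (i : ℕ)] G ∈
            Ideal.span {F}) :
    β = 0 ∧ ∀ i, γ i = 0 :=
  stmt_9_general q1 q2 hq1 hlt s F G hF hG α1 α2 β γ hα1 hα2 hmap
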